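/- arXiv:2402.00301 — 2 statements merged into one kernel-verified Lean document; each statement's English description precedes it below -/
import Mathlib

section
/- Characterization of tangents: Let κ be a conic, P a point on κ, and t a line passing through P. Then t is tangent to κ at P if and only if for every point Q of κ with Q ≠ P and every nonperspective projectivity ρ from the pencil Q* to the pencil P* with κ = κ(ρ;Q,P), one has t = ρ(s), where s is the secant QP. -/
open Configuration

universe u
variable (P L : Type u) [Membership P L]

/-- Three points are collinear if some line passes through all three. -/
def Col (A B C : P) : Prop := ∃ l : L, A ∈ l ∧ B ∈ l ∧ C ∈ l

/-- Every line of `L` is incident with at least `n` distinct points. -/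
def LinesHaveAtLeast (n : ℕ) : Prop :=
  ∀ l : L, ∃ s : Finset P, n ≤ s.card ∧ ∀ X ∈ s, X ∈ l

/-- An object of the plane: the range of a line or the pencil of a point. -/
inductive Obj (P L : Type u) where
  | range : L → Obj P L
  | pencil : P → Obj P L

/-- The carrier of an object: the points on the line, resp. the lines through
the point. -/
abbrev Obj.Carrier {P L : Type u} [Membership P L] : Obj P L → Type u
  | .range l => {X : P // X ∈ l}
  | .pencil U => {k : L // U ∈ k}

/-- `f` is the perspectivity from the range of `l` to the range of `m` with
center `O`, a point outside both `l` and `m` : each point `X` of `l` is mapped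
to the point `(OX)·m`, i.e. `O`, `X` and `f X` are collinear. -/
def IsRangePersp (l m : L) (f : {X : P // X ∈ l} → {Y : P // Y ∈ m}) : Prop :=
  ∃ O : P, O ∉ l ∧ O ∉ m ∧
    ∀ X : {X : P // X ∈ l}, ∃ k : L, O ∈ k ∧ (X : P) ∈ k ∧ ((f X : P)) ∈ k

/-- `f` is the elementary map from the pencil of `U` to the range of a line `l`
not through `U` : each line `k` through `U` is sent to the point `k·l`. -/
def IsElemMap (U : P) (l : L) (f : {k : L // U ∈ k} → {X : P // X ∈ l}) : Prop :=
  U ∉ l ∧ ∀ k : {k : L // U ∈ k}, ((f k : P)) ∈ (k : L)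

/-- `f` is the elementary map from the range of a line `l` to the pencil of a
point `U` outside `l` : each point `X` of `l` is sent to the line `UX`. -/
def IsElemInv (U : P) (l : L) (f : {X : P // X ∈ l} → {k : L // U ∈ k}) : Prop :=
  U ∉ l ∧ ∀ X : {X : P // X ∈ l}, (X : P) ∈ ((f X : L))

/-- A projectivity (between ranges or pencils) : a composite of finitely many
perspectivities and elementary maps. -/
inductive IsProj : (a b : Obj P L) → (a.Carrier → b.Carrier) → Prop where
  | persp {l m : L} {f : {X : P // X ∈ l} → {Y : P // Y ∈ m}} :
      IsRangePersp P L l m f → IsProj (.range l) (.range m) f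
  | elem {U : P} {l : L} {f : {k : L // U ∈ k} → {X : P // X ∈ l}} :
      IsElemMap P L U l f → IsProj (.pencil U) (.range l) f
  | elemInv {U : P} {l : L} {f : {X : P // X ∈ l} → {k : L // U ∈ k}} :
      IsElemInv P L U l f → IsProj (.range l) (.pencil U) f
  | comp {a b c : Obj P L} {f : a.Carrier → b.Carrier} {g : b.Carrier → c.Carrier} :
      IsProj a b f → IsProj b c g → IsProj a c (g ∘ f)

/-- Axiom T: every projectivity of a range or a pencil onto itself having three
distinct fixed elements is the identity. -/
def AxiomT : Prop :=
  ∀ (a : Obj P L) (f : a.Carrier → a.Carrier), IsProj P L a a f →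
    (∃ x y z : a.Carrier, x ≠ y ∧ x ≠ z ∧ y ≠ z ∧ f x = x ∧ f y = y ∧ f z = z) →
    ∀ w, f w = w

/-- The Steiner conic `κ(π;U,V)` defined by a projectivity `π : U* → V*` :
the locus of points `l·π(l)` for `l` a line through `U`. -/
def conicSet (U V : P) (π : {k : L // U ∈ k} → {k : L // V ∈ k}) : Set P :=
  {X : P | ∃ k : {k : L // U ∈ k}, X ∈ (k : L) ∧ X ∈ ((π k : L))}

/-- A conic: the Steiner conic of some nonperspective projectivity between the
pencils of two distinct points. -/
def IsConic (κ : Set P) : Prop :=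
  ∃ (U V : P) (π : {k : L // U ∈ k} → {k : L // V ∈ k}),
    U ≠ V ∧ IsProj P L (.pencil U) (.pencil V) π ∧
    (∀ k : {k : L // U ∈ k}, ((π k : L)) ≠ (k : L)) ∧
    κ = conicSet P L U V π

/-- A line `t` is tangent to `κ` at `Q` if `Q` is on `κ` and on `t`, and is the
only point of `κ` incident with `t`. -/
def IsTangent (κ : Set P) (t : L) (Q : P) : Prop :=
  Q ∈ κ ∧ Q ∈ t ∧ ∀ X ∈ κ, X ∈ t → X = Q

/-- A line is a secant of `κ` if it passes through two distinct points of `κ`. -/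
def IsSecant (κ : Set P) (s : L) : Prop :=
  ∃ X Y : P, X ≠ Y ∧ X ∈ κ ∧ Y ∈ κ ∧ X ∈ s ∧ Y ∈ s

/-- Axiom P: the tangents to a conic at any three distinct points of the conic
are nonconcurrent. -/
def AxiomP : Prop :=
  ∀ κ : Set P, IsConic P L κ →
    ∀ X Y Z : P, X ∈ κ → Y ∈ κ → Z ∈ κ → X ≠ Y → X ≠ Z → Y ≠ Z →
      ∀ tx ty tz : L, IsTangent P L κ tx X → IsTangent P L κ ty Y → IsTangent P L κ tz Z →
        ¬ ∃ W : P, W ∈ tx ∧ W ∈ ty ∧ W ∈ tz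

/-!
The tangent at `V` to the Steiner conic `κ(ρ;Q,V)` is `ρ(QV)`: a line `t ≠ ρ(QV)` through `V`
is `ρ(k)` for a line `k ≠ QV` through `Q`, and `k·ρ(k)` is then a second point of the conic on
`t`. The theorem therefore reduces to Steiner's theorem that every point `Pt` of a conic
`κ(π;U,V)` is the second vertex of a generating projectivity. For `Pt ≠ U, V`, let `u = π⁻¹(UV)`
(the tangent at `U`), `m = U Pt` and `N = π(UV)·m`; then `σ(k) = Pt((N(π(k)·u))·UV)` works.
Indeed, let `X` be a conic point on `k` and `c = Pt X`. The projectivity `Z ↦ π(UZ)·m` from the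
range of `c` to that of `m` fixes `Pt = c·m`, so by Axiom T it is a perspectivity. Evaluating it
at `X`, at `u·c` and at `B = c·UV` shows that its center is `π(k)·u` and is collinear with `N`
and `B`, so `σ(k) = Pt B = c` passes through `X`.
-/

open Configuration.HasPoints Configuration.HasLines Function

section Incidence

variable {P L}

lemma line_unique [Nondegenerate P L] {A B : P} {l m : L} (hAB : A ≠ B) (hAl : A ∈ l)
    (hBl : B ∈ l) (hAm : A ∈ m) (hBm : B ∈ m) : l = m :=
  (Nondegenerate.eq_or_eq hAl hBl hAm hBm).resolve_left hAB

lemma point_unique [Nondegenerate P L] {A B : P} {l m : L} (hlm : l ≠ m) (hAl : A ∈ l)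
    (hBl : B ∈ l) (hAm : A ∈ m) (hBm : B ∈ m) : A = B :=
  (Nondegenerate.eq_or_eq hAl hBl hAm hBm).resolve_right hlm

lemma Col.mem_of_ne [Nondegenerate P L] {O A B : P} {m : L} (h : Col P L O A B) (hAB : A ≠ B)
    (hAm : A ∈ m) (hBm : B ∈ m) : O ∈ m := by
  obtain ⟨k, hOk, hAk, hBk⟩ := h
  exact line_unique hAB hAk hBk hAm hBm ▸ hOk

lemma Col.swap_right {A B C : P} (h : Col P L A B C) : Col P L A C B :=
  let ⟨k, hA, hB, hC⟩ := h
  ⟨k, hA, hC, hB⟩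

lemma Col.rotate {A B C : P} (h : Col P L A B C) : Col P L B C A :=
  let ⟨k, hA, hB, hC⟩ := h
  ⟨k, hB, hC, hA⟩

lemma col_self_right [HasLines P L] {A B : P} (hAB : A ≠ B) : Col P L A B B :=
  ⟨mkLine hAB, (mkLine_ax hAB).1, (mkLine_ax hAB).2, (mkLine_ax hAB).2⟩

lemma LinesHaveAtLeast.mono {m n : ℕ} (h : LinesHaveAtLeast P L n) (hmn : m ≤ n) :
    LinesHaveAtLeast P L m := fun l =>
  let ⟨s, hs, hsl⟩ := h l
  ⟨s, hmn.trans hs, hsl⟩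

lemma LinesHaveAtLeast.exists_two_mem_ne (h3 : LinesHaveAtLeast P L 3) (l : L) (W : P) :
    ∃ A B : P, A ∈ l ∧ B ∈ l ∧ A ≠ B ∧ A ≠ W ∧ B ≠ W := by
  classical
  obtain ⟨s, hcard, hsl⟩ := h3 l
  have h2 : 1 < (s.erase W).card := by
    have := Finset.pred_card_le_card_erase (a := W) (s := s)
    omega
  obtain ⟨A, hA, B, hB, hAB⟩ := Finset.one_lt_card.mp h2
  exact ⟨A, B, hsl A (Finset.mem_of_mem_erase hA), hsl B (Finset.mem_of_mem_erase hB), hAB,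
    Finset.ne_of_mem_erase hA, Finset.ne_of_mem_erase hB⟩

end Incidence

section Projectivities

variable {P L} [ProjectivePlane P L]

noncomputable def perspectivity (O : P) {l m : L} (hl : O ∉ l) (hm : O ∉ m)
    (X : {X : P // X ∈ l}) : {Y : P // Y ∈ m} :=
  have hXO : (X : P) ≠ O := fun h => hl (h ▸ X.2)
  have hkm : mkLine hXO ≠ m := fun h => hm (h ▸ (mkLine_ax hXO).2)
  ⟨mkPoint hkm, (mkPoint_ax hkm).2⟩

lemma perspectivity_col (O : P) {l m : L} (hl : O ∉ l) (hm : O ∉ m) (X : {X : P // X ∈ l}) :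
    Col P L O X (perspectivity O hl hm X) :=
  ⟨_, (mkLine_ax _).2, (mkLine_ax _).1, (mkPoint_ax _).1⟩

lemma perspectivity_eq {O : P} {l m : L} (hl : O ∉ l) (hm : O ∉ m) (X : {X : P // X ∈ l})
    {W : P} (hWm : W ∈ m) (hcol : Col P L O X W) : (perspectivity O hl hm X : P) = W := by
  obtain ⟨k, hOk, hXk, hWk⟩ := hcol
  have hOX : O ≠ (X : P) := fun h => hl (h ▸ X.2)
  have hk : (perspectivity O hl hm X : P) ∈ k :=
    (perspectivity_col O hl hm X).rotate.rotate.mem_of_ne hOX hOk hXk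
  exact point_unique (fun h : k = m => hm (h ▸ hOk)) hk hWk (perspectivity O hl hm X).2 hWm

lemma perspectivity_isRangePersp (O : P) {l m : L} (hl : O ∉ l) (hm : O ∉ m) :
    IsRangePersp P L l m (perspectivity O hl hm) :=
  ⟨O, hl, hm, perspectivity_col O hl hm⟩

lemma perspectivity_perspectivity (O : P) {l m : L} (hl : O ∉ l) (hm : O ∉ m) :
    LeftInverse (perspectivity O hm hl) (perspectivity O hl hm) := fun X =>
  Subtype.ext (perspectivity_eq hm hl _ X.2 (perspectivity_col O hl hm X).swap_right)

lemma eq_perspectivity {O : P} {l m : L} (hl : O ∉ l) (hm : O ∉ m)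
    {f : {X : P // X ∈ l} → {Y : P // Y ∈ m}} (hf : ∀ X : {X : P // X ∈ l}, Col P L O X (f X)) :
    f = perspectivity O hl hm :=
  funext fun X => (Subtype.ext (perspectivity_eq hl hm X (f X).2 (hf X))).symm

noncomputable def pencilSection (U : P) (l : L) (hUl : U ∉ l) (k : {k : L // U ∈ k}) :
    {X : P // X ∈ l} :=
  have hkl : (k : L) ≠ l := fun h => hUl (h ▸ k.2)
  ⟨mkPoint hkl, (mkPoint_ax hkl).2⟩

lemma pencilSection_mem (U : P) (l : L) (hUl : U ∉ l) (k : {k : L // U ∈ k}) :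
    (pencilSection U l hUl k : P) ∈ (k : L) :=
  (mkPoint_ax _).1

lemma pencilSection_eq {U : P} {l : L} (hUl : U ∉ l) (k : {k : L // U ∈ k})
    {W : P} (hWl : W ∈ l) (hWk : W ∈ (k : L)) : (pencilSection U l hUl k : P) = W :=
  point_unique (fun h : (k : L) = l => hUl (h ▸ k.2)) (pencilSection_mem U l hUl k) hWk
    (pencilSection U l hUl k).2 hWl

lemma pencilSection_isElemMap (U : P) (l : L) (hUl : U ∉ l) :
    IsElemMap P L U l (pencilSection U l hUl) :=
  ⟨hUl, pencilSection_mem U l hUl⟩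

noncomputable def rangeProjection (U : P) (l : L) (hUl : U ∉ l) (X : {X : P // X ∈ l}) :
    {k : L // U ∈ k} :=
  have hUX : U ≠ (X : P) := fun h => hUl (h ▸ X.2)
  ⟨mkLine hUX, (mkLine_ax hUX).1⟩

lemma rangeProjection_mem (U : P) (l : L) (hUl : U ∉ l) (X : {X : P // X ∈ l}) :
    (X : P) ∈ (rangeProjection U l hUl X : L) :=
  (mkLine_ax _).2

lemma rangeProjection_eq {U : P} {l : L} (hUl : U ∉ l) (X : {X : P // X ∈ l})
    (k : {k : L // U ∈ k}) (hXk : (X : P) ∈ (k : L)) : rangeProjection U l hUl X = k :=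
  Subtype.ext (line_unique (fun h : U = (X : P) => hUl (h ▸ X.2)) (rangeProjection U l hUl X).2
    (rangeProjection_mem U l hUl X) k.2 hXk)

lemma rangeProjection_isElemInv (U : P) (l : L) (hUl : U ∉ l) :
    IsElemInv P L U l (rangeProjection U l hUl) :=
  ⟨hUl, rangeProjection_mem U l hUl⟩

lemma rangeProjection_pencilSection (U : P) (l : L) (hUl : U ∉ l) :
    LeftInverse (rangeProjection U l hUl) (pencilSection U l hUl) := fun k =>
  rangeProjection_eq hUl _ k (pencilSection_mem U l hUl k)

lemma pencilSection_rangeProjection (U : P) (l : L) (hUl : U ∉ l) :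
    LeftInverse (pencilSection U l hUl) (rangeProjection U l hUl) := fun X =>
  Subtype.ext (pencilSection_eq hUl _ X.2 (rangeProjection_mem U l hUl X))

lemma IsProj.exists_inverse {a b : Obj P L} {f : a.Carrier → b.Carrier}
    (hf : IsProj P L a b f) :
    ∃ g : b.Carrier → a.Carrier, IsProj P L b a g ∧ LeftInverse g f ∧ RightInverse g f := by
  induction hf with
  | persp h =>
    obtain ⟨O, hOl, hOm, hcol⟩ := h
    obtain rfl := eq_perspectivity hOl hOm hcol
    exact ⟨_, .persp (perspectivity_isRangePersp O hOm hOl),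
      perspectivity_perspectivity O hOl hOm, perspectivity_perspectivity O hOm hOl⟩
  | elem h =>
    obtain ⟨hUl, hmem⟩ := h
    obtain rfl : _ = pencilSection _ _ hUl :=
      funext fun k => (Subtype.ext (pencilSection_eq hUl k (Subtype.property _) (hmem k))).symm
    exact ⟨_, .elemInv (rangeProjection_isElemInv _ _ hUl),
      rangeProjection_pencilSection _ _ hUl, pencilSection_rangeProjection _ _ hUl⟩
  | elemInv h =>
    obtain ⟨hUl, hmem⟩ := h
    obtain rfl : _ = rangeProjection _ _ hUl :=
      funext fun X => (rangeProjection_eq hUl X _ (hmem X)).symm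
    exact ⟨_, .elem (pencilSection_isElemMap _ _ hUl),
      pencilSection_rangeProjection _ _ hUl, rangeProjection_pencilSection _ _ hUl⟩
  | comp _ _ ihf ihg =>
    obtain ⟨f', hf', hf'l, hf'r⟩ := ihf
    obtain ⟨g', hg', hg'l, hg'r⟩ := ihg
    exact ⟨f' ∘ g', hg'.comp hf', hg'l.comp hf'l, hg'r.comp hf'r⟩

lemma IsProj.bijective {a b : Obj P L} {f : a.Carrier → b.Carrier} (hf : IsProj P L a b f) :
    Bijective f :=
  let ⟨_, _, hl, hr⟩ := hf.exists_inverse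
  ⟨hl.injective, hr.surjective⟩

end Projectivities

section FundamentalTheorem

variable {P L} [ProjectivePlane P L]

lemma AxiomT.isProj_ext (hT : AxiomT P L) {a b : Obj P L}
    {f g : a.Carrier → b.Carrier} (hf : IsProj P L a b f) (hg : IsProj P L a b g)
    {x y z : a.Carrier} (hxy : x ≠ y) (hxz : x ≠ z) (hyz : y ≠ z)
    (hx : f x = g x) (hy : f y = g y) (hz : f z = g z) : f = g := by
  obtain ⟨g', hg', hg'l, hg'r⟩ := hg.exists_inverse
  have hid := hT a (g' ∘ f) (hf.comp hg') ⟨x, y, z, hxy, hxz, hyz,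
    by rw [comp_apply, hx, hg'l], by rw [comp_apply, hy, hg'l], by rw [comp_apply, hz, hg'l]⟩
  funext w
  calc f w = g (g' (f w)) := (hg'r _).symm
    _ = g w := congrArg g (hid w)

lemma exists_center {c c' : L} {A₁ A₂ B₁ B₂ : P} (hA₁ : A₁ ∈ c) (hA₂ : A₂ ∈ c) (hB₁ : B₁ ∈ c')
    (hB₂ : B₂ ∈ c') (hA : A₁ ≠ A₂) (hB : B₁ ≠ B₂) (hA₁c' : A₁ ∉ c') (hA₂c' : A₂ ∉ c')
    (hB₁c : B₁ ∉ c) (hB₂c : B₂ ∉ c) :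
    ∃ O : P, O ∉ c ∧ O ∉ c' ∧ Col P L O A₁ B₁ ∧ Col P L O A₂ B₂ := by
  have hAB₁ : A₁ ≠ B₁ := fun h => hB₁c (h ▸ hA₁)
  have hAB₂ : A₂ ≠ B₂ := fun h => hB₂c (h ▸ hA₂)
  obtain ⟨hA₁ℓ₁, hB₁ℓ₁⟩ := mkLine_ax (L := L) hAB₁
  obtain ⟨hA₂ℓ₂, hB₂ℓ₂⟩ := mkLine_ax (L := L) hAB₂
  have hℓ₁c : mkLine hAB₁ ≠ c := fun h => hB₁c (h ▸ hB₁ℓ₁)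
  have hℓ₂c : mkLine hAB₂ ≠ c := fun h => hB₂c (h ▸ hB₂ℓ₂)
  have hℓ₁₂ : mkLine hAB₁ ≠ mkLine (L := L) hAB₂ := fun h =>
    hℓ₁c (line_unique hA hA₁ℓ₁ (h ▸ hA₂ℓ₂) hA₁ hA₂)
  obtain ⟨hOℓ₁, hOℓ₂⟩ := mkPoint_ax (P := P) hℓ₁₂
  refine ⟨mkPoint hℓ₁₂, fun hOc => hA ?_, fun hOc' => hB ?_,
    ⟨_, hOℓ₁, hA₁ℓ₁, hB₁ℓ₁⟩, ⟨_, hOℓ₂, hA₂ℓ₂, hB₂ℓ₂⟩⟩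
  · exact (point_unique hℓ₁c hOℓ₁ hA₁ℓ₁ hOc hA₁).symm.trans
      (point_unique hℓ₂c hOℓ₂ hA₂ℓ₂ hOc hA₂)
  · have hℓ₁c' : mkLine hAB₁ ≠ c' := fun h => hA₁c' (h ▸ hA₁ℓ₁)
    have hℓ₂c' : mkLine hAB₂ ≠ c' := fun h => hA₂c' (h ▸ hA₂ℓ₂)
    exact (point_unique hℓ₁c' hOℓ₁ hB₁ℓ₁ hOc' hB₁).symm.trans
      (point_unique hℓ₂c' hOℓ₂ hB₂ℓ₂ hOc' hB₂)

lemma IsProj.isRangePersp_of_apply_eq (h3 : LinesHaveAtLeast P L 3) (hT : AxiomT P L)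
    {c c' : L} (hcc' : c ≠ c') {g : {X : P // X ∈ c} → {Y : P // Y ∈ c'}}
    (hg : IsProj P L (.range c) (.range c') g) {W : P} (hWc : W ∈ c) (hWc' : W ∈ c')
    (hfix : (g ⟨W, hWc⟩ : P) = W) : IsRangePersp P L c c' g := by
  obtain ⟨A₁, A₂, hA₁, hA₂, hA, hA₁W, hA₂W⟩ := h3.exists_two_mem_ne c W
  have hinj : Injective g := hg.bijective.1
  have hoff : ∀ X : {X : P // X ∈ c}, (X : P) ≠ W → (X : P) ∉ c' ∧ (g X : P) ∉ c :=
    fun X hXW => ⟨fun h => hXW (point_unique hcc' X.2 hWc h hWc'), fun h => hXW <|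
      congrArg Subtype.val (hinj (Subtype.ext ((point_unique hcc' h hWc (g X).2 hWc').trans
        hfix.symm)))⟩
  have hgA : (g ⟨A₁, hA₁⟩ : P) ≠ g ⟨A₂, hA₂⟩ := fun h =>
    hA (congrArg Subtype.val (hinj (Subtype.ext h)))
  obtain ⟨O, hOc, hOc', hO₁, hO₂⟩ := exists_center hA₁ hA₂ (g _).2 (g _).2 hA hgA
    (hoff ⟨A₁, hA₁⟩ hA₁W).1 (hoff ⟨A₂, hA₂⟩ hA₂W).1 (hoff _ hA₁W).2 (hoff _ hA₂W).2
  have hOW : O ≠ W := fun h => hOc (h ▸ hWc)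
  have hg_eq : g = perspectivity O hOc hOc' :=
    hT.isProj_ext hg (.persp (perspectivity_isRangePersp O hOc hOc'))
      (x := ⟨W, hWc⟩) (y := ⟨A₁, hA₁⟩) (z := ⟨A₂, hA₂⟩)
      (fun h => hA₁W (congrArg Subtype.val h).symm) (fun h => hA₂W (congrArg Subtype.val h).symm)
      (fun h => hA (congrArg Subtype.val h))
      (Subtype.ext ((perspectivity_eq _ _ _ hWc' (col_self_right hOW)).trans hfix.symm).symm)
      (Subtype.ext (perspectivity_eq _ _ _ (g _).2 hO₁).symm)
      (Subtype.ext (perspectivity_eq _ _ _ (g _).2 hO₂).symm)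
  exact hg_eq ▸ perspectivity_isRangePersp O hOc hOc'

end FundamentalTheorem

section Conic

variable {P L} {U V : P} {π : {k : L // U ∈ k} → {k : L // V ∈ k}}

lemma conicSet_eq_of_leftInverse {g : {k : L // V ∈ k} → {k : L // U ∈ k}}
    (hgl : LeftInverse g π) (hgr : RightInverse g π) :
    conicSet P L U V π = conicSet P L V U g := by
  ext X
  constructor
  · rintro ⟨k, hXk, hXπk⟩
    exact ⟨π k, hXπk, by rwa [hgl k]⟩
  · rintro ⟨m, hXm, hXgm⟩
    exact ⟨g m, hXgm, by rwa [hgr m]⟩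

variable [ProjectivePlane P L]

lemma mem_conicSet_left (hπ : Surjective π) (hUV : U ≠ V) : U ∈ conicSet P L U V π := by
  obtain ⟨k, hk⟩ := hπ ⟨mkLine hUV, (mkLine_ax hUV).2⟩
  exact ⟨k, k.2, by rw [hk]; exact (mkLine_ax hUV).1⟩

lemma mem_conicSet_right (hUV : U ≠ V) : V ∈ conicSet P L U V π :=
  ⟨⟨mkLine hUV, (mkLine_ax hUV).1⟩, (mkLine_ax hUV).2, (π _).2⟩

lemma mem_apply_of_mem_conicSet {X : P} (hX : X ∈ conicSet P L U V π) {k : {k : L // U ∈ k}}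
    (hXk : X ∈ (k : L)) (hXU : X ≠ U) : X ∈ (π k : L) := by
  obtain ⟨k', hXk', hXπk'⟩ := hX
  obtain rfl : k' = k := Subtype.ext (line_unique hXU.symm k'.2 hXk' k.2 hXk)
  exact hXπk'

lemma notMem_of_mem_conicSet (hnp : ∀ k, (π k : L) ≠ k) {X Y : P}
    (hX : X ∈ conicSet P L U V π) (hY : Y ∈ conicSet P L U V π) (hXY : X ≠ Y) (hXU : X ≠ U)
    (hYU : Y ≠ U) {l : L} (hXl : X ∈ l) (hYl : Y ∈ l) : U ∉ l := fun hUl =>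
  hXY (point_unique (hnp ⟨l, hUl⟩) (mem_apply_of_mem_conicSet hX hXl hXU)
    (mem_apply_of_mem_conicSet hY hYl hYU) hXl hYl)

lemma isTangent_conicSet_iff (hπ : Bijective π) (hnp : ∀ k, (π k : L) ≠ k) (hUV : U ≠ V)
    {s : L} (hUs : U ∈ s) (hVs : V ∈ s) {t : L} (hVt : V ∈ t) :
    IsTangent P L (conicSet P L U V π) t V ↔ t = π ⟨s, hUs⟩ := by
  constructor
  · intro htan
    obtain ⟨k, hk⟩ := hπ.2 ⟨t, hVt⟩
    have hkt : (k : L) ≠ t := fun h =>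
      hUV (htan.2.2 U (mem_conicSet_left hπ.2 hUV) (h ▸ k.2))
    obtain ⟨hXk, hXt⟩ := mkPoint_ax (P := P) hkt
    have hXV : mkPoint hkt = V :=
      htan.2.2 _ ⟨k, hXk, by rw [hk]; exact hXt⟩ hXt
    obtain rfl : k = ⟨s, hUs⟩ := Subtype.ext (line_unique hUV k.2 (hXV ▸ hXk) hUs hVs)
    rw [hk]
  · rintro rfl
    refine ⟨mem_conicSet_right hUV, (π _).2, fun X ⟨k, hXk, hXπk⟩ hXt => by_contra fun hXV => ?_⟩
    obtain rfl : k = ⟨s, hUs⟩ :=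
      hπ.1 (Subtype.ext (line_unique hXV hXπk (π k).2 hXt (π _).2))
    exact hXV (point_unique (hnp _) hXt (π _).2 hXk hVs)

lemma conicSet_eq_of_forall_mem {W : P} {σ : {k : L // U ∈ k} → {k : L // W ∈ k}}
    (hπ : ∀ k, (π k : L) ≠ k) (hσ : ∀ k, (σ k : L) ≠ k)
    (h : ∀ (k : {k : L // U ∈ k}) (X : P), X ∈ (k : L) → X ∈ (π k : L) → X ∈ (σ k : L)) :
    conicSet P L U V π = conicSet P L U W σ := by
  ext Y
  constructor
  · rintro ⟨k, hYk, hYπk⟩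
    exact ⟨k, hYk, h k Y hYk hYπk⟩
  · rintro ⟨k, hYk, hYσk⟩
    obtain ⟨hXπk, hXk⟩ := mkPoint_ax (P := P) (hπ k)
    obtain rfl : Y = mkPoint (hπ k) :=
      point_unique (hσ k).symm hYk hXk hYσk (h k _ hXk hXπk)
    exact ⟨k, hYk, hXπk⟩

end Conic

section VertexChange

variable {P L} [ProjectivePlane P L] {U V : P} {π : {k : L // U ∈ k} → {k : L // V ∈ k}}

lemma exists_center_of_mem_conicSet (h3 : LinesHaveAtLeast P L 3) (hT : AxiomT P L)
    (hπ : IsProj P L (.pencil U) (.pencil V) π) (hnp : ∀ k, (π k : L) ≠ k)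
    {s₀ : L} (hUs₀ : U ∈ s₀) {u : {k : L // U ∈ k}} (hu : (π u : L) = s₀)
    {Pt : P} (hPκ : Pt ∈ conicSet P L U V π) (hPU : Pt ≠ U) (hPu : Pt ∉ (u : L))
    {m : L} (hUm : U ∈ m) (hPm : Pt ∈ m) (hVm : V ∉ m)
    {N : P} (hNv : N ∈ (π ⟨s₀, hUs₀⟩ : L)) (hNm : N ∈ m)
    {k : {k : L // U ∈ k}} {X : P} (hXk : X ∈ (k : L)) (hXπk : X ∈ (π k : L))
    (hXU : X ≠ U) (hXP : X ≠ Pt)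
    {c : L} (hPc : Pt ∈ c) (hXc : X ∈ c) {B : P} (hBc : B ∈ c) (hBs₀ : B ∈ s₀) :
    ∃ O : P, O ∈ (u : L) ∧ O ∈ (π k : L) ∧ Col P L O B N := by
  have hUc : U ∉ c := notMem_of_mem_conicSet hnp hPκ ⟨k, hXk, hXπk⟩ hXP.symm hPU hXU hPc hXc
  have hcm : c ≠ m := fun h => hUc (h ▸ hUm)
  set ζ := pencilSection V m hVm ∘ π ∘ rangeProjection U c hUc with hζ_def
  have hζ_mem : ∀ (Z : {Z : P // Z ∈ c}) (k' : {k : L // U ∈ k}), (Z : P) ∈ (k' : L) →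
      (ζ Z : P) ∈ (π k' : L) := by
    intro Z k' hZk'
    simp only [hζ_def, comp_apply, rangeProjection_eq hUc Z k' hZk']
    exact pencilSection_mem _ _ _ _
  have hζ_eq : ∀ (Z : {Z : P // Z ∈ c}) (k' : {k : L // U ∈ k}) {W : P}, (Z : P) ∈ (k' : L) →
      W ∈ (π k' : L) → W ∈ m → (ζ Z : P) = W := fun Z k' W hZk' hWπ hWm =>
    point_unique (fun h : (π k' : L) = m => hVm (h ▸ (π k').2)) (hζ_mem Z k' hZk') hWπ (ζ Z).2 hWm
  obtain ⟨O, -, -, hO⟩ := IsProj.isRangePersp_of_apply_eq h3 hT hcm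
    (((IsProj.elemInv (rangeProjection_isElemInv U c hUc)).comp hπ).comp
      (.elem (pencilSection_isElemMap V m hVm))) hPc hPm
    (hζ_eq ⟨Pt, hPc⟩ ⟨m, hUm⟩ hPm (mem_apply_of_mem_conicSet hPκ hPm hPU) hPm)
  have hXm : X ∉ m := fun h => hXP (point_unique hcm hXc hPc h hPm)
  have hOπk : O ∈ (π k : L) :=
    Col.mem_of_ne (hO ⟨X, hXc⟩) (fun h : X = ζ ⟨X, hXc⟩ => hXm (h ▸ (ζ _).2)) hXπk (hζ_mem _ k hXk)
  have huc : (u : L) ≠ c := fun h => hPu (h ▸ hPc)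
  obtain ⟨hZu, hZc⟩ := mkPoint_ax (P := P) huc
  have hUπu : U ∈ (π u : L) := hu ▸ hUs₀
  have hζZ : (ζ ⟨_, hZc⟩ : P) = U := hζ_eq _ u hZu hUπu hUm
  have hOu : O ∈ (u : L) :=
    Col.mem_of_ne (hO ⟨_, hZc⟩) (by rw [hζZ]; exact fun h => hUc (h ▸ hZc)) hZu
      (by rw [hζZ]; exact u.2)
  refine ⟨O, hOu, hOπk, ?_⟩
  rw [← hζ_eq ⟨B, hBc⟩ ⟨s₀, hUs₀⟩ hBs₀ hNv hNm]
  exact hO ⟨B, hBc⟩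

lemma mem_apply_of_mem_of_mem_apply (h3 : LinesHaveAtLeast P L 3) (hT : AxiomT P L)
    (hπ : IsProj P L (.pencil U) (.pencil V) π) (hnp : ∀ k, (π k : L) ≠ k)
    {s₀ : L} (hUs₀ : U ∈ s₀) {u : {k : L // U ∈ k}} (hu : (π u : L) = s₀)
    {Pt : P} (hPκ : Pt ∈ conicSet P L U V π) (hPU : Pt ≠ U) (hPu : Pt ∉ (u : L))
    (hPs₀ : Pt ∉ s₀) {m : L} (hUm : U ∈ m) (hPm : Pt ∈ m) (hVm : V ∉ m)
    {N : P} (hNv : N ∈ (π ⟨s₀, hUs₀⟩ : L)) (hNm : N ∈ m) (hNu : N ∉ (u : L))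
    {σ : {k : L // U ∈ k} → {k : L // Pt ∈ k}}
    (hσ : ∀ k Y B, Y ∈ (u : L) → Y ∈ (π k : L) → B ∈ s₀ → Col P L N Y B → B ∈ (σ k : L))
    (k : {k : L // U ∈ k}) (X : P) (hXk : X ∈ (k : L)) (hXπk : X ∈ (π k : L)) :
    X ∈ (σ k : L) := by
  by_cases hXU : X = U
  · subst X
    have hUV : U ≠ V := fun h => hVm (h ▸ hUm)
    obtain rfl : k = u := hπ.bijective.1
      (Subtype.ext (line_unique hUV hXπk (π k).2 (hu ▸ hUs₀) (π u).2))
    exact hσ k U U k.2 hXπk hUs₀ (col_self_right fun h => hNu (h ▸ k.2))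
  by_cases hXP : X = Pt
  · exact hXP ▸ (σ k).2
  have hPX : Pt ≠ X := Ne.symm hXP
  obtain ⟨hPc, hXc⟩ := mkLine_ax (L := L) hPX
  have hcs₀ : mkLine hPX ≠ s₀ := fun h => hPs₀ (h ▸ hPc)
  obtain ⟨hBc, hBs₀⟩ := mkPoint_ax (P := P) hcs₀
  obtain ⟨O, hOu, hOπk, hOBN⟩ := exists_center_of_mem_conicSet h3 hT hπ hnp hUs₀ hu hPκ hPU
    hPu hUm hPm hVm hNv hNm hXk hXπk hXU hXP hPc hXc hBc hBs₀
  have hBσ := hσ k O _ hOu hOπk hBs₀ hOBN.rotate.rotate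
  have hσc : (σ k : L) = mkLine hPX :=
    line_unique (fun h => hPs₀ (by rw [h]; exact hBs₀)) (σ k).2 hBσ hPc hBc
  exact hσc ▸ hXc

lemma exists_isProj_mem_of_col (hπ : IsProj P L (.pencil U) (.pencil V) π) {u s₀ : L}
    (hVu : V ∉ u) {N : P} (hNu : N ∉ u) (hNs₀ : N ∉ s₀) {Pt : P} (hPs₀ : Pt ∉ s₀) :
    ∃ σ : {k : L // U ∈ k} → {k : L // Pt ∈ k}, IsProj P L (.pencil U) (.pencil Pt) σ ∧
      ∀ k Y B, Y ∈ u → Y ∈ (π k : L) → B ∈ s₀ → Col P L N Y B → B ∈ (σ k : L) := by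
  refine ⟨rangeProjection Pt s₀ hPs₀ ∘ perspectivity N hNu hNs₀ ∘ pencilSection V u hVu ∘ π,
    ((hπ.comp (.elem (pencilSection_isElemMap V u hVu))).comp
      (.persp (perspectivity_isRangePersp N hNu hNs₀))).comp
      (.elemInv (rangeProjection_isElemInv Pt s₀ hPs₀)), fun k Y B hYu hYπk hBs₀ hcol => ?_⟩
  have h₁ : pencilSection V u hVu (π k) = ⟨Y, hYu⟩ :=
    Subtype.ext (pencilSection_eq hVu _ hYu hYπk)
  have h₂ : perspectivity N hNu hNs₀ ⟨Y, hYu⟩ = ⟨B, hBs₀⟩ :=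
    Subtype.ext (perspectivity_eq hNu hNs₀ _ hBs₀ hcol)
  simp only [comp_apply, h₁, h₂]
  exact rangeProjection_mem Pt s₀ hPs₀ ⟨B, hBs₀⟩

lemma exists_conicSet_eq_of_mem (h3 : LinesHaveAtLeast P L 3) (hT : AxiomT P L) (hUV : U ≠ V)
    (hπ : IsProj P L (.pencil U) (.pencil V) π) (hnp : ∀ k, (π k : L) ≠ k)
    {Pt : P} (hPκ : Pt ∈ conicSet P L U V π) (hPU : Pt ≠ U) (hPV : Pt ≠ V) :
    ∃ σ : {k : L // U ∈ k} → {k : L // Pt ∈ k}, IsProj P L (.pencil U) (.pencil Pt) σ ∧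
      (∀ k, (σ k : L) ≠ k) ∧ conicSet P L U V π = conicSet P L U Pt σ := by
  obtain ⟨hUs₀, hVs₀⟩ := mkLine_ax (L := L) hUV
  set s₀ := mkLine (L := L) hUV
  set v := π ⟨s₀, hUs₀⟩
  obtain ⟨u, hu⟩ := hπ.bijective.2 ⟨s₀, hVs₀⟩
  have hu' : (π u : L) = s₀ := congrArg Subtype.val hu
  have hvs₀ : (v : L) ≠ s₀ := hnp _
  have hPs₀ : Pt ∉ s₀ := fun h =>
    hPV (point_unique hvs₀ (mem_apply_of_mem_conicSet hPκ h hPU) (π _).2 h hVs₀)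
  have hPu : Pt ∉ (u : L) := fun h => hPs₀ (hu' ▸ mem_apply_of_mem_conicSet hPκ h hPU)
  have hVu : V ∉ (u : L) := fun h => hnp u (hu'.trans (line_unique hUV hUs₀ hVs₀ u.2 h))
  obtain ⟨hUm, hPm⟩ := mkLine_ax (L := L) hPU.symm
  have hVm : V ∉ mkLine hPU.symm := fun h => hPs₀ (line_unique hUV hUm h hUs₀ hVs₀ ▸ hPm)
  have hvm : (v : L) ≠ mkLine hPU.symm := fun h => hVm (h ▸ v.2)
  obtain ⟨hNv, hNm⟩ := mkPoint_ax (P := P) hvm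
  have hNs₀ : mkPoint hvm ∉ s₀ := fun h => hVm (point_unique hvs₀ hNv v.2 h hVs₀ ▸ hNm)
  have hNu : mkPoint hvm ∉ (u : L) := fun h => by
    by_cases hNU : mkPoint hvm = U
    · exact hvs₀ (line_unique hUV (hNU ▸ hNv) v.2 hUs₀ hVs₀)
    · exact hPu (line_unique hNU hNm hUm h u.2 ▸ hPm)
  obtain ⟨σ, hσ, hσ_mem⟩ := exists_isProj_mem_of_col hπ hVu hNu hNs₀ hPs₀
  have hmem := mem_apply_of_mem_of_mem_apply h3 hT hπ hnp hUs₀ hu' hPκ hPU hPu hPs₀ hUm hPm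
    hVm hNv hNm hNu hσ_mem
  have hσnp : ∀ k, (σ k : L) ≠ k := by
    intro k hk
    have hUσu : U ∈ (σ u : L) := hmem u U u.2 (hu' ▸ hUs₀)
    have hPk : Pt ∈ (k : L) := hk ▸ (σ k).2
    have huk : u = k := hσ.bijective.1
      (Subtype.ext (line_unique hPU.symm hUσu (σ u).2 (hk ▸ k.2) (σ k).2))
    exact hPu (huk ▸ hPk)
  exact ⟨σ, hσ, hσnp, conicSet_eq_of_forall_mem hnp hσnp hmem⟩

lemma IsConic.exists_eq_conicSet_of_mem (h3 : LinesHaveAtLeast P L 3)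
    (hT : AxiomT P L) {κ : Set P} (hκ : IsConic P L κ) {Pt : P} (hPκ : Pt ∈ κ) :
    ∃ Q ∈ κ, Q ≠ Pt ∧ ∃ ρ : {k : L // Q ∈ k} → {k : L // Pt ∈ k},
      IsProj P L (.pencil Q) (.pencil Pt) ρ ∧ (∀ k, (ρ k : L) ≠ k) ∧
      κ = conicSet P L Q Pt ρ := by
  obtain ⟨U, V, π, hUV, hπ, hnp, rfl⟩ := hκ
  by_cases hPV : Pt = V
  · subst hPV
    exact ⟨U, mem_conicSet_left hπ.bijective.2 hUV, hUV, π, hπ, hnp, rfl⟩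
  by_cases hPU : Pt = U
  · subst hPU
    obtain ⟨g, hg, hgl, hgr⟩ := hπ.exists_inverse
    refine ⟨V, mem_conicSet_right hUV, hUV.symm, g, hg, fun m h => hnp (g m) ?_,
      conicSet_eq_of_leftInverse hgl hgr⟩
    rw [hgr m]
    exact h.symm
  obtain ⟨σ, hσ, hσnp, hσκ⟩ := exists_conicSet_eq_of_mem h3 hT hUV hπ hnp hPκ hPU hPV
  exact ⟨U, mem_conicSet_left hπ.bijective.2 hUV, Ne.symm hPU, σ, hσ, hσnp, hσκ⟩

end VertexChange

/-- **Characterization of tangents.** Let `κ` be a conic, `Pt` a point on `κ`,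
and `t` a line through `Pt`.  Then `t` is tangent to `κ` at `Pt` if and only if
for every point `Q` of `κ` with `Q ≠ Pt` and every nonperspective projectivity
`ρ : Q* → Pt*` with `κ = κ(ρ;Q,Pt)`, one has `t = ρ(s)` where `s` is the secant
`QPt`. -/
theorem tangent_characterization
    [Configuration.ProjectivePlane P L]
    (h6 : LinesHaveAtLeast P L 6) (hT : AxiomT P L)
    (κ : Set P) (hκ : IsConic P L κ)
    (Pt : P) (hPκ : Pt ∈ κ) (t : L) (hPt : Pt ∈ t) :
    IsTangent P L κ t Pt ↔
      ∀ Q : P, Q ∈ κ → Q ≠ Pt →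
        ∀ ρ : {k : L // Q ∈ k} → {k : L // Pt ∈ k},
          IsProj P L (.pencil Q) (.pencil Pt) ρ →
          (∀ k : {k : L // Q ∈ k}, ((ρ k : L)) ≠ (k : L)) →
          κ = conicSet P L Q Pt ρ →
          ∀ (s : L) (hQs : Q ∈ s), Pt ∈ s → t = ((ρ ⟨s, hQs⟩ : L)) := by
  obtain ⟨Q, hQκ, hQP, ρ, hρ, hρnp, hκρ⟩ :=
    hκ.exists_eq_conicSet_of_mem (h6.mono (by norm_num)) hT hPκ
  constructor
  · rintro htan Q' - hQ'P ρ' hρ' hρ'np rfl s hQs hPs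
    exact (isTangent_conicSet_iff hρ'.bijective hρ'np hQ'P hQs hPs hPt).1 htan
  · intro H
    obtain ⟨hQs, hPs⟩ := mkLine_ax (L := L) hQP
    rw [hκρ, isTangent_conicSet_iff hρ.bijective hρnp hQP hQs hPs hPt]
    exact H Q hQκ hQP ρ hρ hρnp hκρ _ hQs hPs
end

section
/- Existence of two secants through any point: Let κ be a conic, and assume Axiom P. Then through any given point P of the plane there exist two distinct secants of κ, i.e., there exist distinct lines s₁ ≠ s₂, each passing through P, and each passing through two distinct points of κ. -/
open Configuration

universe u
variable (P L : Type u) [Membership P L]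

/-!
Through `Axiom T`, a conic `κ(π;U,V)` is an arc: three of its points on a line `s` would be fixed
points of the projectivity `X ↦ (π(UX))·s` of `s`, which would then fix `UV·s` and force
`π(UV) = UV`. If `Pt ∉ κ`, a conic point `X` whose join with `Pt` is not a secant spans a tangent
through `Pt`, and by `Axiom P` there are at most two such points. Since a conic has at least
six points, at least three of them are joined to `Pt` by secants, and these secants are not all
equal because no three points of the conic are collinear.
-/

open Configuration.HasLines (mkLine mkLine_ax)
open Configuration.HasPoints (mkPoint mkPoint_ax)

def IsArc (κ : Set P) : Prop :=
  ∀ X ∈ κ, ∀ Y ∈ κ, ∀ Z ∈ κ, X ≠ Y → X ≠ Z → Y ≠ Z → ¬ Col P L X Y Z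

def OnSecantThrough (κ : Set P) (Pt X : P) : Prop :=
  ∃ s : L, Pt ∈ s ∧ X ∈ s ∧ IsSecant P L κ s

theorem eq_or_eq_or_eq_of_subsingleton_diff {α : Type*} {S : Set α} {U : α}
    (hS : (S \ {U}).Subsingleton) {X Y Z : α} (hX : X ∈ S) (hY : Y ∈ S) (hZ : Z ∈ S) :
    X = Y ∨ X = Z ∨ Y = Z := by
  by_contra! h
  obtain ⟨hXY, hXZ, hYZ⟩ := h
  rcases eq_or_ne X U with rfl | hXU
  · exact hYZ (hS ⟨hY, hXY.symm⟩ ⟨hZ, hXZ.symm⟩)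
  rcases eq_or_ne Y U with rfl | hYU
  · exact hXZ (hS ⟨hX, hXU⟩ ⟨hZ, hYZ.symm⟩)
  · exact hXY (hS ⟨hX, hXU⟩ ⟨hY, hYU⟩)

section

variable {P L}

section Incidence

variable [Nondegenerate P L]

theorem line_eq_of_ne {A B : P} {l m : L} (hAB : A ≠ B)
    (hAl : A ∈ l) (hBl : B ∈ l) (hAm : A ∈ m) (hBm : B ∈ m) : l = m :=
  (Nondegenerate.eq_or_eq hAl hBl hAm hBm).resolve_left hAB

theorem point_eq_of_ne {A B : P} {l m : L} (hlm : l ≠ m)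
    (hAl : A ∈ l) (hBl : B ∈ l) (hAm : A ∈ m) (hBm : B ∈ m) : A = B :=
  (Nondegenerate.eq_or_eq hAl hBl hAm hBm).resolve_right hlm

theorem IsProj.injective {a b : Obj P L} {f : a.Carrier → b.Carrier}
    (h : IsProj P L a b f) : Function.Injective f := by
  induction h with
  | @persp l m f h =>
    obtain ⟨O, hOl, hOm, hf⟩ := h
    intro X Y hXY
    obtain ⟨k, hOk, hXk, hfXk⟩ := hf X
    obtain ⟨k', hOk', hYk', hfYk'⟩ := hf Y
    have hOfY : O ≠ (f Y : P) := fun e => hOm (e ▸ (f Y).2)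
    have hkk' : k = k' := line_eq_of_ne hOfY hOk (hXY ▸ hfXk) hOk' hfYk'
    exact Subtype.ext (point_eq_of_ne (show l ≠ k from fun e => hOl (e ▸ hOk)) X.2 Y.2 hXk
      (hkk' ▸ hYk'))
  | @elem U l f h =>
    intro k k' hkk'
    have hUfk' : U ≠ (f k' : P) := fun e => h.1 (e ▸ (f k').2)
    exact Subtype.ext (line_eq_of_ne hUfk' k.2 (hkk' ▸ h.2 k) k'.2 (h.2 k'))
  | @elemInv U l f h =>
    intro X X' hXX'
    have hlfX' : l ≠ (f X' : L) := fun e => h.1 (e ▸ (f X').2)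
    exact Subtype.ext (point_eq_of_ne hlfX' X.2 X'.2 (hXX' ▸ h.2 X) (h.2 X'))
  | comp _ _ ih₁ ih₂ => exact ih₂.comp ih₁

end Incidence

theorem exists_isElemInv [HasLines P L] {U : P} {l : L}
    (hUl : U ∉ l) : ∃ f, IsElemInv P L U l f :=
  have hne (X : {X : P // X ∈ l}) : U ≠ X := fun e => hUl (e ▸ X.2)
  ⟨fun X => ⟨mkLine (hne X), (mkLine_ax (hne X)).1⟩, hUl, fun X => (mkLine_ax (hne X)).2⟩

theorem exists_isElemMap [HasPoints P L] {U : P} {l : L}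
    (hUl : U ∉ l) : ∃ f, IsElemMap P L U l f :=
  have hne (k : {k : L // U ∈ k}) : (k : L) ≠ l := fun e => hUl (e ▸ k.2)
  ⟨fun k => ⟨mkPoint (hne k), (mkPoint_ax (hne k)).2⟩, hUl, fun k => (mkPoint_ax (hne k)).1⟩

section Conic

variable {U V : P} {π : {k : L // U ∈ k} → {k : L // V ∈ k}}

section Nondegenerate

variable [Nondegenerate P L]

theorem notMem_conicSet_of_mem_line_through_centers (hnp : ∀ k, (π k : L) ≠ k) {m : L}
    (hUm : U ∈ m) (hVm : V ∈ m) {W : P} (hWm : W ∈ m) (hWU : W ≠ U) (hWV : W ≠ V) :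
    W ∉ conicSet P L U V π := by
  rintro ⟨k, hWk, hWπk⟩
  exact hnp k ((line_eq_of_ne hWV hWπk (π k).2 hWm hVm).trans
    (line_eq_of_ne hWU hWk k.2 hWm hUm).symm)

theorem subsingleton_conicSet_inter_diff_fst (hnp : ∀ k, (π k : L) ≠ k) {s : L}
    (hUs : U ∈ s) : ({W | W ∈ conicSet P L U V π ∧ W ∈ s} \ {U}).Subsingleton := by
  rintro A ⟨⟨⟨kA, hAk, hAπk⟩, hAs⟩, hAU⟩ B ⟨⟨⟨kB, hBk, hBπk⟩, hBs⟩, hBU⟩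
  by_contra hAB
  have hkA : (kA : L) = s := line_eq_of_ne (Ne.symm hAU) kA.2 hAk hUs hAs
  have hkB : (kB : L) = s := line_eq_of_ne (Ne.symm hBU) kB.2 hBk hUs hBs
  obtain rfl : kA = kB := Subtype.ext (hkA.trans hkB.symm)
  exact hnp kA ((line_eq_of_ne hAB hAπk hBπk hAs hBs).trans hkA.symm)

theorem subsingleton_conicSet_inter_diff_snd (hπ : IsProj P L (.pencil U) (.pencil V) π)
    (hnp : ∀ k, (π k : L) ≠ k) {s : L} (hVs : V ∈ s) :
    ({W | W ∈ conicSet P L U V π ∧ W ∈ s} \ {V}).Subsingleton := by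
  rintro A ⟨⟨⟨kA, hAk, hAπk⟩, hAs⟩, hAV⟩ B ⟨⟨⟨kB, hBk, hBπk⟩, hBs⟩, hBV⟩
  by_contra hAB
  have hπA : (π kA : L) = s := line_eq_of_ne hAV hAπk (π kA).2 hAs hVs
  have hπB : (π kB : L) = s := line_eq_of_ne hBV hBπk (π kB).2 hBs hVs
  obtain rfl : kA = kB := hπ.injective (Subtype.ext (hπA.trans hπB.symm))
  exact hnp kA (hπA.trans (line_eq_of_ne hAB hAk hBk hAs hBs).symm)

end Nondegenerate

theorem exists_injective_mem_conicSet [HasPoints P L] (hUV : U ≠ V)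
    (hπ : IsProj P L (.pencil U) (.pencil V) π) (hnp : ∀ k, (π k : L) ≠ k) :
    ∃ c : {k : L // U ∈ k} → P, Function.Injective c ∧ ∀ k, c k ∈ conicSet P L U V π := by
  refine ⟨fun k => mkPoint (P := P) (hnp k), fun k k' hkk' => ?_,
    fun k => ⟨k, (mkPoint_ax (hnp k)).2, (mkPoint_ax (hnp k)).1⟩⟩
  by_contra hne
  beta_reduce at hkk'
  have hQ := mkPoint_ax (P := P) (hnp k')
  have hQ' : mkPoint (P := P) (hnp k') ∈ (π k : L) ∧ mkPoint (P := P) (hnp k') ∈ (k : L) :=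
    hkk' ▸ mkPoint_ax (hnp k)
  have hUQ : U = mkPoint (hnp k') :=
    point_eq_of_ne (fun e => hne (Subtype.ext e)) k.2 hQ'.2 k'.2 hQ.2
  have hππ : (π k : L) = π k' := line_eq_of_ne hUV (hUQ ▸ hQ'.1) (π k).2 (hUQ ▸ hQ.1) (π k').2
  exact hne (hπ.injective (Subtype.ext hππ))

variable [ProjectivePlane P L]

theorem exists_isProj_fixed_iff_mem_conicSet (hπ : IsProj P L (.pencil U) (.pencil V) π)
    {s : L} (hUs : U ∉ s) (hVs : V ∉ s) :
    ∃ σ : {X : P // X ∈ s} → {X : P // X ∈ s}, IsProj P L (.range s) (.range s) σ ∧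
      ∀ W, σ W = W ↔ (W : P) ∈ conicSet P L U V π := by
  obtain ⟨e₁, he₁⟩ := exists_isElemInv (L := L) hUs
  obtain ⟨e₂, he₂⟩ := exists_isElemMap (P := P) hVs
  refine ⟨e₂ ∘ π ∘ e₁, ((IsProj.elemInv he₁).comp hπ).comp (IsProj.elem he₂),
    fun W => ⟨fun hW => ⟨e₁ W, he₁.2 W, ?_⟩, ?_⟩⟩
  · have hW' : e₂ (π (e₁ W)) = W := hW
    simpa only [hW'] using he₂.2 (π (e₁ W))
  · rintro ⟨k, hWk, hWπk⟩
    have hUW : U ≠ W := fun e => hUs (e ▸ W.2)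
    have hπks : (π k : L) ≠ s := fun e => hVs (e ▸ (π k).2)
    have hk : e₁ W = k := Subtype.ext (line_eq_of_ne hUW (e₁ W).2 (he₁.2 W) k.2 hWk)
    simp only [Function.comp_apply, hk]
    exact Subtype.ext (point_eq_of_ne hπks (he₂.2 (π k)) hWπk (e₂ (π k)).2 W.2)

theorem conicSet_inter_not_three_of_notMem (hT : AxiomT P L) (hUV : U ≠ V)
    (hπ : IsProj P L (.pencil U) (.pencil V) π) (hnp : ∀ k, (π k : L) ≠ k)
    {s : L} (hUs : U ∉ s) (hVs : V ∉ s) {X Y Z : {W : P // W ∈ s}}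
    (hXY : X ≠ Y) (hXZ : X ≠ Z) (hYZ : Y ≠ Z) (hX : (X : P) ∈ conicSet P L U V π)
    (hY : (Y : P) ∈ conicSet P L U V π) (hZ : (Z : P) ∈ conicSet P L U V π) : False := by
  obtain ⟨σ, hσ, hfix⟩ := exists_isProj_fixed_iff_mem_conicSet hπ hUs hVs
  have hid : ∀ W, σ W = W :=
    hT (.range s) σ hσ ⟨X, Y, Z, hXY, hXZ, hYZ, (hfix X).2 hX, (hfix Y).2 hY, (hfix Z).2 hZ⟩
  have hUVs : mkLine hUV ≠ s := fun e => hUs (e ▸ (mkLine_ax hUV).1)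
  set W₀ : {W : P // W ∈ s} := ⟨mkPoint hUVs, (mkPoint_ax hUVs).2⟩
  exact notMem_conicSet_of_mem_line_through_centers hnp (mkLine_ax hUV).1 (mkLine_ax hUV).2
    (mkPoint_ax hUVs).1 (fun e => hUs (e ▸ W₀.2)) (fun e => hVs (e ▸ W₀.2)) ((hfix W₀).1 (hid W₀))

theorem isArc_conicSet (hT : AxiomT P L) (hUV : U ≠ V)
    (hπ : IsProj P L (.pencil U) (.pencil V) π) (hnp : ∀ k, (π k : L) ≠ k) :
    IsArc P L (conicSet P L U V π) := by
  rintro X hX Y hY Z hZ hXY hXZ hYZ ⟨s, hXs, hYs, hZs⟩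
  have not_three {A : P} (hS : ({W | W ∈ conicSet P L U V π ∧ W ∈ s} \ {A}).Subsingleton) :
      False := by
    rcases eq_or_eq_or_eq_of_subsingleton_diff hS ⟨hX, hXs⟩ ⟨hY, hYs⟩ ⟨hZ, hZs⟩ with h | h | h
    exacts [hXY h, hXZ h, hYZ h]
  by_cases hUs : U ∈ s
  · exact not_three (subsingleton_conicSet_inter_diff_fst hnp hUs)
  by_cases hVs : V ∈ s
  · exact not_three (subsingleton_conicSet_inter_diff_snd hπ hnp hVs)
  exact conicSet_inter_not_three_of_notMem hT hUV hπ hnp hUs hVs (X := ⟨X, hXs⟩) (Y := ⟨Y, hYs⟩)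
    (Z := ⟨Z, hZs⟩) (by simpa) (by simpa) (by simpa) hX hY hZ

end Conic

theorem exists_two_secants_of_isArc {κ : Set P} (hκ : IsArc P L κ) {Pt A B C : P}
    (hA : A ∈ κ) (hB : B ∈ κ) (hC : C ∈ κ) (hAB : A ≠ B) (hAC : A ≠ C) (hBC : B ≠ C)
    (hA' : OnSecantThrough P L κ Pt A) (hB' : OnSecantThrough P L κ Pt B)
    (hC' : OnSecantThrough P L κ Pt C) :
    ∃ s₁ s₂ : L, s₁ ≠ s₂ ∧ Pt ∈ s₁ ∧ Pt ∈ s₂ ∧ IsSecant P L κ s₁ ∧ IsSecant P L κ s₂ := by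
  obtain ⟨a, hPa, hAa, ha⟩ := hA'
  obtain ⟨b, hPb, hBb, hb⟩ := hB'
  obtain ⟨c, hPc, hCc, hc⟩ := hC'
  by_cases hab : a = b
  · subst hab
    exact ⟨a, c, fun hac => hκ A hA B hB C hC hAB hAC hBC ⟨a, hAa, hBb, hac ▸ hCc⟩,
      hPa, hPc, ha, hc⟩
  · exact ⟨a, b, hab, hPa, hPb, ha, hb⟩

section Secants

variable [ProjectivePlane P L] {κ : Set P}

theorem IsConic.isArc (hT : AxiomT P L) (hκ : IsConic P L κ) : IsArc P L κ := by
  obtain ⟨U, V, π, hUV, hπ, hnp, rfl⟩ := hκ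
  exact isArc_conicSet hT hUV hπ hnp

theorem IsConic.exists_finset_subset (hκ : IsConic P L κ) {n : ℕ} (h : LinesHaveAtLeast P L n) :
    ∃ t : Finset P, n ≤ t.card ∧ ↑t ⊆ κ := by
  classical
  obtain ⟨U, V, π, hUV, hπ, hnp, rfl⟩ := hκ
  obtain ⟨l, hUl⟩ := Nondegenerate.exists_line (P := P) (L := L) U
  obtain ⟨s, hn, hs⟩ := h l
  obtain ⟨e, he⟩ := exists_isElemInv hUl
  obtain ⟨c, hc, hcκ⟩ := exists_injective_mem_conicSet hUV hπ hnp
  refine ⟨(s.subtype (· ∈ l)).map ⟨c ∘ e, hc.comp (IsProj.elemInv he).injective⟩, ?_, ?_⟩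
  · rwa [Finset.card_map, Finset.card_subtype, Finset.filter_true_of_mem hs]
  · intro X hX
    obtain ⟨Y, -, rfl⟩ := Finset.mem_map.1 hX
    exact hcκ _

theorem onSecantThrough_of_mem {Pt X : P} (hPt : Pt ∈ κ) (hX : X ∈ κ) (hne : Pt ≠ X) :
    OnSecantThrough P L κ Pt X :=
  ⟨mkLine hne, (mkLine_ax hne).1, (mkLine_ax hne).2,
    Pt, X, hne, hPt, hX, (mkLine_ax hne).1, (mkLine_ax hne).2⟩

theorem exists_isTangent_of_not_onSecantThrough {Pt X : P} (hX : X ∈ κ) (hne : Pt ≠ X)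
    (h : ¬ OnSecantThrough P L κ Pt X) : ∃ t : L, Pt ∈ t ∧ IsTangent P L κ t X :=
  ⟨mkLine hne, (mkLine_ax hne).1, hX, (mkLine_ax hne).2, fun Y hY hYt => by_contra fun hYX =>
    h ⟨mkLine hne, (mkLine_ax hne).1, (mkLine_ax hne).2, Y, X, hYX, hY, hX, hYt, (mkLine_ax hne).2⟩⟩

open Classical in
theorem card_filter_not_onSecantThrough_le_two (hP : AxiomP P L) (hκ : IsConic P L κ)
    {Pt : P} (hPt : Pt ∉ κ) (t : Finset P) (ht : ↑t ⊆ κ) :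
    (t.filter fun X => ¬ OnSecantThrough P L κ Pt X).card ≤ 2 := by
  by_contra! h
  have tangent {X : P} (hX : X ∈ t.filter fun X => ¬ OnSecantThrough P L κ Pt X) :
      ∃ t : L, Pt ∈ t ∧ IsTangent P L κ t X := by
    rw [Finset.mem_filter] at hX
    exact exists_isTangent_of_not_onSecantThrough (ht hX.1) (fun e => hPt (e ▸ ht hX.1)) hX.2
  obtain ⟨A, hA, B, hB, C, hC, hAB, hAC, hBC⟩ := Finset.two_lt_card.1 h
  obtain ⟨tA, hPtA, hA'⟩ := tangent hA
  obtain ⟨tB, hPtB, hB'⟩ := tangent hB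
  obtain ⟨tC, hPtC, hC'⟩ := tangent hC
  exact hP κ hκ A B C hA'.1 hB'.1 hC'.1 hAB hAC hBC tA tB tC hA' hB' hC' ⟨Pt, hPtA, hPtB, hPtC⟩

open Classical in
theorem three_le_card_filter_onSecantThrough (hP : AxiomP P L) (hκ : IsConic P L κ) (Pt : P)
    (t : Finset P) (ht : ↑t ⊆ κ) (ht5 : 5 ≤ t.card) :
    3 ≤ (t.filter (OnSecantThrough P L κ Pt)).card := by
  by_cases hPt : Pt ∈ κ
  · have hsub : t.erase Pt ⊆ t.filter (OnSecantThrough P L κ Pt) := fun X hX => by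
      rw [Finset.mem_erase] at hX
      exact Finset.mem_filter.2 ⟨hX.2, onSecantThrough_of_mem hPt (ht hX.2) (Ne.symm hX.1)⟩
    have := Finset.card_le_card hsub
    have := Finset.pred_card_le_card_erase (s := t) (a := Pt)
    omega
  · have := card_filter_not_onSecantThrough_le_two hP hκ hPt t ht
    have := Finset.card_filter_add_card_filter_not (s := t) (p := OnSecantThrough P L κ Pt)
    omega

end Secants

end

/-- **Existence of two secants through any point.** Let `κ` be a conic, and
assume Axiom P.  Then through any given point `Pt` of the plane there exist two
distinct secants of `κ`. -/
theorem two_secants_through_point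
    [Configuration.ProjectivePlane P L]
    (h6 : LinesHaveAtLeast P L 6) (hT : AxiomT P L) (hP : AxiomP P L)
    (κ : Set P) (hκ : IsConic P L κ)
    (Pt : P) :
    ∃ s₁ s₂ : L, s₁ ≠ s₂ ∧ Pt ∈ s₁ ∧ Pt ∈ s₂ ∧
      IsSecant P L κ s₁ ∧ IsSecant P L κ s₂ := by
  classical
  obtain ⟨t, ht6, htκ⟩ := hκ.exists_finset_subset h6
  obtain ⟨A, hA, B, hB, C, hC, hAB, hAC, hBC⟩ :=
    Finset.two_lt_card.1 (three_le_card_filter_onSecantThrough hP hκ Pt t htκ (by omega))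
  rw [Finset.mem_filter] at hA hB hC
  exact exists_two_secants_of_isArc (hκ.isArc hT) (htκ hA.1) (htκ hB.1) (htκ hC.1)
    hAB hAC hBC hA.2 hB.2 hC.2
end
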